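/- arXiv:1203.3790 — 6 statements merged into one kernel-verified Lean document; each statement's English description precedes it below -/
import Mathlib

section
/- With the notation of the block decomposition of an orthogonal projection P on V ⊕ N (blocks R, S, T), the kernel of S splits orthogonally as ker S = ker R ⊕ ker(Id − R). That is, every v ∈ ker S decomposes uniquely as v = v₀ + v₁ with Rv₀ = 0, (Id−R)v₁ = 0, and ⟨v₀, v₁⟩ = 0; conversely ker R ⊆ ker S and ker(Id−R) ⊆ ker S. -/
open RealInnerProductSpace

/-! `ker S = ker (Sᵗ S) = ker (R (Id - R))`, and since `v = (v - R v) + R v` with `R` and `Id - R`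
commuting, the kernel of `R (Id - R)` is `ker R ⊔ ker (Id - R)`. These are the eigenspaces of the
self-adjoint `R` for the eigenvalues `0` and `1`, hence orthogonal. -/

namespace LinearMap

theorem ker_comp_id_sub_eq_sup {R M : Type*} [Ring R] [AddCommGroup M] [Module R M]
    (f : M →ₗ[R] M) : ker (f ∘ₗ (id - f)) = ker f ⊔ ker (id - f) := by
  apply le_antisymm
  · intro v hv
    have hv : f (v - f v) = 0 := by simpa using hv
    rw [show v = (v - f v) + f v by abel]
    refine Submodule.add_mem_sup hv ?_
    simpa [← map_sub] using hv
  · refine sup_le (fun v hv => ?_) (fun v hv => ?_)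
    · have hv : f v = 0 := hv
      simp [hv]
    · simp_all

theorem IsSymmetric.isOrtho_ker_ker_id_sub {𝕜 E : Type*} [RCLike 𝕜] [NormedAddCommGroup E]
    [InnerProductSpace 𝕜 E] {T : E →ₗ[𝕜] E} (hT : T.IsSymmetric) : ker T ⟂ ker (id - T) := by
  rw [Submodule.isOrtho_iff_inner_eq]
  intro u hu v hv
  have hu : T u = 0 := hu
  have hv : T v = v := (sub_eq_zero.mp (by simpa using hv)).symm
  calc inner 𝕜 u v = inner 𝕜 u (T v) := by rw [hv]
    _ = 0 := by rw [← hT, hu, inner_zero_left]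

end LinearMap

/-- The kernel of `S` splits orthogonally as `ker S = ker R ⊕ ker (Id - R)`. -/
theorem ker_S_eq_ker_R_orthogonal_sum_ker_id_sub_R
    {V N : Type*} [NormedAddCommGroup V] [InnerProductSpace ℝ V] [FiniteDimensional ℝ V]
    [NormedAddCommGroup N] [InnerProductSpace ℝ N] [FiniteDimensional ℝ N]
    (R : V →ₗ[ℝ] V) (S : V →ₗ[ℝ] N)
    (hR : LinearMap.adjoint R = R)
    (hStS : LinearMap.adjoint S ∘ₗ S = R ∘ₗ (LinearMap.id - R)) :
    LinearMap.ker S = LinearMap.ker R ⊔ LinearMap.ker (LinearMap.id - R) ∧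
      ∀ v₀ ∈ LinearMap.ker R, ∀ v₁ ∈ LinearMap.ker (LinearMap.id - R),
        ⟪v₀, v₁⟫ = 0 := by
  have hR : R.IsSymmetric :=
    (LinearMap.isSymmetric_iff_isSelfAdjoint R).mpr (LinearMap.isSelfAdjoint_iff'.mpr hR)
  refine ⟨?_, Submodule.isOrtho_iff_inner_eq.mp hR.isOrtho_ker_ker_id_sub⟩
  rw [← LinearMap.ker_adjoint_comp_self, hStS, LinearMap.ker_comp_id_sub_eq_sup]
end

section
/- With the notation of the block decomposition of an orthogonal projection P on V ⊕ N (blocks R, S, Sᵗ, T), the orthogonal complement of the image of S in N splits orthogonally as (S(V))^⊥ = ker T ⊕ ker(Id − T). -/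
open RealInnerProductSpace

theorem LinearMap.ker_comp_id_sub_self {R M : Type*} [CommRing R] [AddCommGroup M] [Module R M]
    (f : M →ₗ[R] M) : ker (f ∘ₗ (id - f)) = ker f ⊔ ker (id - f) := by
  have hcoprime : IsCoprime (Polynomial.X : Polynomial R) (1 - Polynomial.X) :=
    ⟨1, 1, by ring⟩
  simpa [Module.End.mul_eq_comp, ← Module.End.one_eq_id] using
    (Polynomial.sup_ker_aeval_eq_ker_aeval_mul_of_coprime f hcoprime).symm

theorem LinearMap.IsSymmetric.inner_eq_zero_of_mem_ker_of_mem_ker_id_sub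
    {E : Type*} [NormedAddCommGroup E] [InnerProductSpace ℝ E] {T : E →ₗ[ℝ] E}
    (hT : T.IsSymmetric) {x y : E} (hx : x ∈ ker T) (hy : y ∈ ker (id - T)) : ⟪x, y⟫ = 0 := by
  have hTy : T y = y := (sub_eq_zero.mp hy).symm
  rw [← hTy, ← hT, mem_ker.mp hx, inner_zero_left]

theorem range_S_orthogonal_eq_ker_T_sup_ker_id_sub_T_general
    {V N : Type*} [NormedAddCommGroup V] [InnerProductSpace ℝ V] [FiniteDimensional ℝ V]
    [NormedAddCommGroup N] [InnerProductSpace ℝ N] [FiniteDimensional ℝ N]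
    (S : V →ₗ[ℝ] N) (T : N →ₗ[ℝ] N)
    (hT : LinearMap.adjoint T = T)
    (hSSt : S ∘ₗ LinearMap.adjoint S = T ∘ₗ (LinearMap.id - T)) :
    (LinearMap.range S)ᗮ = LinearMap.ker T ⊔ LinearMap.ker (LinearMap.id - T) ∧
      ∀ n₀ ∈ LinearMap.ker T, ∀ n₁ ∈ LinearMap.ker (LinearMap.id - T),
        ⟪n₀, n₁⟫ = 0 := by
  have hTsymm : T.IsSymmetric :=
    (LinearMap.isSymmetric_iff_isSelfAdjoint T).mpr (LinearMap.isSelfAdjoint_iff'.mpr hT)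
  refine ⟨?_, fun _ h₀ _ h₁ => hTsymm.inner_eq_zero_of_mem_ker_of_mem_ker_id_sub h₀ h₁⟩
  rw [LinearMap.orthogonal_range, ← LinearMap.ker_self_comp_adjoint, hSSt,
    LinearMap.ker_comp_id_sub_self]

/-- The orthogonal complement of `S(V)` in `N` splits orthogonally as
`(S(V))ᗮ = ker T ⊕ ker (Id - T)`. -/
theorem range_S_orthogonal_eq_ker_T_sup_ker_id_sub_T
    {V N : Type*} [NormedAddCommGroup V] [InnerProductSpace ℝ V] [FiniteDimensional ℝ V]
    [NormedAddCommGroup N] [InnerProductSpace ℝ N] [FiniteDimensional ℝ N]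
    (R : V →ₗ[ℝ] V) (S : V →ₗ[ℝ] N) (T : N →ₗ[ℝ] N)
    (hT : LinearMap.adjoint T = T)
    (hSSt : S ∘ₗ LinearMap.adjoint S = T ∘ₗ (LinearMap.id - T)) :
    (LinearMap.range S)ᗮ = LinearMap.ker T ⊔ LinearMap.ker (LinearMap.id - T) ∧
      ∀ n₀ ∈ LinearMap.ker T, ∀ n₁ ∈ LinearMap.ker (LinearMap.id - T),
        ⟪n₀, n₁⟫ = 0 :=
  range_S_orthogonal_eq_ker_T_sup_ker_id_sub_T_general S T hT hSSt
end

section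
/- With the notation of the block decomposition of an orthogonal projection P on V ⊕ N (blocks R, S, T), the restriction of T to (S(V))^⊥ is the orthogonal projection of (S(V))^⊥ onto ker(Id − T). In particular, for all ξ, η ∈ (S(V))^⊥, ⟨Pξ, Pη⟩ = ⟨Tξ, η⟩ (identifying ξ, η ∈ N with elements of V ⊕ N). -/
open RealInnerProductSpace

/-! On `(S(V))ᗮ = ker Sᵗ` the identity `S Sᵗ = T (Id - T)` collapses to `T² = T`, so `T` is
idempotent there; being self-adjoint, `⟪Tξ, Tη⟫ = ⟪T²ξ, η⟫ = ⟪Tξ, η⟫`, while the `Sᵗ`-component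
of `Pξ` vanishes. -/

section BlockDecomposition

variable {V N : Type*} [NormedAddCommGroup V] [InnerProductSpace ℝ V] [FiniteDimensional ℝ V]
  [NormedAddCommGroup N] [InnerProductSpace ℝ N] [FiniteDimensional ℝ N]

lemma adjoint_apply_eq_zero_of_mem_orthogonal_range {S : V →ₗ[ℝ] N} {ξ : N}
    (hξ : ξ ∈ (LinearMap.range S)ᗮ) : LinearMap.adjoint S ξ = 0 := by
  rwa [LinearMap.orthogonal_range] at hξ

lemma apply_apply_eq_apply_of_mem_orthogonal_range {S : V →ₗ[ℝ] N} {T : N →ₗ[ℝ] N}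
    (hSSt : S ∘ₗ LinearMap.adjoint S = T ∘ₗ (LinearMap.id - T)) {ξ : N}
    (hξ : ξ ∈ (LinearMap.range S)ᗮ) : T (T ξ) = T ξ := by
  have h := LinearMap.congr_fun hSSt ξ
  simp only [LinearMap.comp_apply, LinearMap.sub_apply, LinearMap.id_apply, map_sub,
    adjoint_apply_eq_zero_of_mem_orthogonal_range hξ, map_zero] at h
  exact (sub_eq_zero.mp h.symm).symm

end BlockDecomposition

/-- `P` applied to `ξ ∈ N ⊆ V ⊕ N` is `(Sᵗξ, Tξ)`, so the left side of the second conjunct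
is `⟪Pξ, Pη⟫`. -/
theorem T_restricted_is_orthogonal_projection_general
    {V N : Type*} [NormedAddCommGroup V] [InnerProductSpace ℝ V] [FiniteDimensional ℝ V]
    [NormedAddCommGroup N] [InnerProductSpace ℝ N] [FiniteDimensional ℝ N]
    (S : V →ₗ[ℝ] N) (T : N →ₗ[ℝ] N)
    (hT : LinearMap.adjoint T = T)
    (hSSt : S ∘ₗ LinearMap.adjoint S = T ∘ₗ (LinearMap.id - T)) :
    (∀ ξ ∈ (LinearMap.range S)ᗮ,
        T ξ ∈ LinearMap.ker (LinearMap.id - T) ∧ ξ - T ξ ∈ LinearMap.ker T) ∧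
      ∀ ξ ∈ (LinearMap.range S)ᗮ, ∀ η ∈ (LinearMap.range S)ᗮ,
        ⟪(LinearMap.adjoint S) ξ, (LinearMap.adjoint S) η⟫ + ⟪T ξ, T η⟫ =
          ⟪T ξ, η⟫ := by
  have hTT := fun ξ (hξ : ξ ∈ (LinearMap.range S)ᗮ) ↦
    apply_apply_eq_apply_of_mem_orthogonal_range hSSt hξ
  refine ⟨fun ξ hξ ↦ ⟨?_, ?_⟩, fun ξ hξ η _ ↦ ?_⟩
  · simp [hTT ξ hξ]
  · simp [hTT ξ hξ]
  · rw [adjoint_apply_eq_zero_of_mem_orthogonal_range hξ, inner_zero_left, zero_add,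
      ← LinearMap.adjoint_inner_left, hT, hTT ξ hξ]

/-- The restriction of `T` to `(S(V))ᗮ` is the orthogonal projection onto
`ker (Id - T)`; in particular `⟨Pξ, Pη⟩ = ⟨Tξ, η⟩` on `(S(V))ᗮ`, where
`P` applied to `ξ ∈ N ⊆ V ⊕ N` is `(Sᵗξ, Tξ)`. -/
theorem T_restricted_is_orthogonal_projection
    {V N : Type*} [NormedAddCommGroup V] [InnerProductSpace ℝ V] [FiniteDimensional ℝ V]
    [NormedAddCommGroup N] [InnerProductSpace ℝ N] [FiniteDimensional ℝ N]
    (R : V →ₗ[ℝ] V) (S : V →ₗ[ℝ] N) (T : N →ₗ[ℝ] N)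
    (hT : LinearMap.adjoint T = T)
    (hSSt : S ∘ₗ LinearMap.adjoint S = T ∘ₗ (LinearMap.id - T)) :
    (∀ ξ ∈ (LinearMap.range S)ᗮ,
        T ξ ∈ LinearMap.ker (LinearMap.id - T) ∧ ξ - T ξ ∈ LinearMap.ker T) ∧
      ∀ ξ ∈ (LinearMap.range S)ᗮ, ∀ η ∈ (LinearMap.range S)ᗮ,
        ⟪(LinearMap.adjoint S) ξ, (LinearMap.adjoint S) η⟫ + ⟪T ξ, T η⟫ =
          ⟪T ξ, η⟫ :=
  T_restricted_is_orthogonal_projection_general S T hT hSSt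
end

section
/- Let V, N be finite-dimensional real inner product spaces, P a self-adjoint idempotent on V ⊕ N with block components R, S, T as above, and suppose L is a subspace of (S(V))^⊥ ⊆ N and λ ∈ ℝ are such that (T − λ·Id)(L) ⊆ L^⊥. Then for all ξ, η ∈ L one has ⟨Pξ, Pη⟩ = λ⟨ξ, η⟩; i.e., P restricted to L is a similarity of ratio √λ (and in particular λ ∈ [0,1] if L ≠ 0). -/
/-!
Since `P` is a self-adjoint idempotent, `⟪Pξ, Pη⟫ = ⟪ξ, P²η⟫ = ⟪ξ, Pη⟫`, and for `ξ, η ∈ N` the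
right-hand side is `⟪ξ, Tη⟫ = λ⟪ξ, η⟫`. Taking `ξ = η ≠ 0` gives `‖Tξ‖² ≤ λ‖ξ‖² = ⟪Tξ, ξ⟫`, and
then `0 ≤ ‖Tξ - λξ‖² ≤ (λ - λ²)‖ξ‖²` forces `λ ∈ [0, 1]`.
-/

open RealInnerProductSpace

section

variable {E F : Type*} [NormedAddCommGroup E] [InnerProductSpace ℝ E]
  [NormedAddCommGroup F] [InnerProductSpace ℝ F]

theorem mem_Icc_of_inner_eq_of_norm_sq_le {x y : E} {c : ℝ} (hx : x ≠ 0)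
    (hinner : ⟪y, x⟫ = c * ‖x‖ ^ 2) (hnorm : ‖y‖ ^ 2 ≤ c * ‖x‖ ^ 2) : 0 ≤ c ∧ c ≤ 1 := by
  have hx2 : 0 < ‖x‖ ^ 2 := by positivity
  have hdist : ‖y - c • x‖ ^ 2 = ‖y‖ ^ 2 - c ^ 2 * ‖x‖ ^ 2 := by
    rw [norm_sub_sq_real, real_inner_smul_right, hinner, norm_smul, mul_pow, Real.norm_eq_abs,
      sq_abs]
    ring
  have hc : 0 ≤ c * (1 - c) := by
    refine nonneg_of_mul_nonneg_left ?_ hx2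
    nlinarith [sq_nonneg ‖y - c • x‖]
  constructor <;> nlinarith

theorem LinearMap.IsSymmetric.inner_map_right_eq_of_inner_sub_smul_eq_zero {T : E →ₗ[ℝ] E}
    (hT : T.IsSymmetric) {c : ℝ} {ξ η : E} (h : ⟪T ξ - c • ξ, η⟫ = 0) :
    ⟪ξ, T η⟫ = c * ⟪ξ, η⟫ := by
  rw [inner_sub_left, real_inner_smul_left, sub_eq_zero] at h
  rw [← hT, h]

/-- For `P = [[R, Sᵗ], [S, T]]` this is `⟪Pξ, Pη⟫ = ⟪ξ, Pη⟫` on `N`, with the hypothesis being the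
`N`-component of `P² = P` on `N`. -/
theorem inner_adjoint_add_inner_map_eq_inner_map [FiniteDimensional ℝ E] [FiniteDimensional ℝ F]
    (S : E →ₗ[ℝ] F) {T : F →ₗ[ℝ] F} (hT : T.IsSymmetric)
    (hidem : ∀ η, S (LinearMap.adjoint S η) + T (T η) = T η) (ξ η : F) :
    ⟪LinearMap.adjoint S ξ, LinearMap.adjoint S η⟫ + ⟪T ξ, T η⟫ = ⟪ξ, T η⟫ := by
  rw [LinearMap.adjoint_inner_left, hT, ← inner_add_right, hidem]

end

theorem similarity_of_ratio_sqrt_lambda_general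
    {V N : Type*} [NormedAddCommGroup V] [InnerProductSpace ℝ V] [FiniteDimensional ℝ V]
    [NormedAddCommGroup N] [InnerProductSpace ℝ N] [FiniteDimensional ℝ N]
    (R : V →ₗ[ℝ] V) (S : V →ₗ[ℝ] N) (St : N →ₗ[ℝ] V) (T : N →ₗ[ℝ] N)
    (hT : LinearMap.adjoint T = T)
    (hSt : St = LinearMap.adjoint S)
    (hidem2 : ∀ (v : V) (n : N), S (R v + St n) + T (S v + T n) = S v + T n)
    (L : Submodule ℝ N) (lam : ℝ)
    (hTL : ∀ ξ ∈ L, ∀ η ∈ L, ⟪T ξ - lam • ξ, η⟫ = 0) :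
    (∀ ξ ∈ L, ∀ η ∈ L, ⟪St ξ, St η⟫ + ⟪T ξ, T η⟫ = lam * ⟪ξ, η⟫) ∧
      (L ≠ ⊥ → 0 ≤ lam ∧ lam ≤ 1) := by
  subst hSt
  have hTsymm : T.IsSymmetric :=
    (LinearMap.isSymmetric_iff_isSelfAdjoint T).2 (LinearMap.isSelfAdjoint_iff'.2 hT)
  have key : ∀ ξ ∈ L, ∀ η ∈ L,
      ⟪LinearMap.adjoint S ξ, LinearMap.adjoint S η⟫ + ⟪T ξ, T η⟫ = lam * ⟪ξ, η⟫ := by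
    intro ξ hξ η hη
    rw [inner_adjoint_add_inner_map_eq_inner_map S hTsymm (fun n ↦ by simpa using hidem2 0 n),
      hTsymm.inner_map_right_eq_of_inner_sub_smul_eq_zero (hTL ξ hξ η hη)]
  refine ⟨key, fun hne ↦ ?_⟩
  obtain ⟨ξ, hξ, hξ0⟩ := Submodule.exists_mem_ne_zero_of_ne_bot hne
  have hnorm : ‖T ξ‖ ^ 2 ≤ lam * ‖ξ‖ ^ 2 := by
    have h := key ξ hξ ξ hξ
    simp only [real_inner_self_eq_norm_sq] at h
    nlinarith [sq_nonneg ‖LinearMap.adjoint S ξ‖]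
  have hinner : ⟪T ξ, ξ⟫ = lam * ‖ξ‖ ^ 2 := by
    have h := hTL ξ hξ ξ hξ
    rwa [inner_sub_left, real_inner_smul_left, real_inner_self_eq_norm_sq, sub_eq_zero] at h
  exact mem_Icc_of_inner_eq_of_norm_sq_le hξ0 hinner hnorm

/-- If `L ⊆ (S(V))ᗮ` with `(T - λ·Id)(L) ⊆ Lᗮ`, then `P` restricted to `L` is a
similarity of ratio `√λ`: `⟨Pξ, Pη⟩ = λ⟨ξ, η⟩` for `ξ, η ∈ L` (with
`Pξ = (Sᵗξ, Tξ)`), and `λ ∈ [0,1]` if `L ≠ 0`. -/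
theorem similarity_of_ratio_sqrt_lambda
    {V N : Type*} [NormedAddCommGroup V] [InnerProductSpace ℝ V] [FiniteDimensional ℝ V]
    [NormedAddCommGroup N] [InnerProductSpace ℝ N] [FiniteDimensional ℝ N]
    (R : V →ₗ[ℝ] V) (S : V →ₗ[ℝ] N) (St : N →ₗ[ℝ] V) (T : N →ₗ[ℝ] N)
    (hR : LinearMap.adjoint R = R) (hT : LinearMap.adjoint T = T)
    (hSt : St = LinearMap.adjoint S)
    (hidem1 : ∀ (v : V) (n : N), R (R v + St n) + St (S v + T n) = R v + St n)
    (hidem2 : ∀ (v : V) (n : N), S (R v + St n) + T (S v + T n) = S v + T n)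
    (L : Submodule ℝ N) (hL : L ≤ (LinearMap.range S)ᗮ) (lam : ℝ)
    (hTL : ∀ ξ ∈ L, ∀ η ∈ L, ⟪T ξ - lam • ξ, η⟫ = 0) :
    (∀ ξ ∈ L, ∀ η ∈ L, ⟪St ξ, St η⟫ + ⟪T ξ, T η⟫ = lam * ⟪ξ, η⟫) ∧
      (L ≠ ⊥ → 0 ≤ lam ∧ lam ≤ 1) :=
  similarity_of_ratio_sqrt_lambda_general R S St T hT hSt hidem2 L lam hTL
end

section
/- Let V, N be finite-dimensional real inner product spaces and R : V → V, S : V → N, T : N → N the block components of the orthogonal projection P : V ⊕ N → V ⊕ N. Suppose S has rank one with S X = ⟨X,B⟩ S B for a unit vector B, R = λ⟨·,B⟩B with λ ∈ (0,1), and |SB|² = λ(1−λ). Then the kernel of P (i.e., of the projection π₂ restricted to V ⊕ N) is spanned by ker T ⊆ N together with the vector (λ B, −S B) ∈ V ⊕ N. -/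
/-!
The kernel of the block operator `P (v, n) = (R v + Sᵗ n, S v + T n)` contains `(λB, -SB)`,
by `|SB|² = λ(1 - λ)` and `T (SB) = λ SB`, and it contains `(0, u)` for `u ∈ ker T`, since `SB`
is an eigenvector of the symmetric `T` for the eigenvalue `λ ≠ 0`, hence orthogonal to `ker T`.
Conversely, the first block equation forces `v ∈ ℝB`, say `v = c λ B`; subtracting `c (λB, -SB)`
leaves a kernel vector `(0, u)`, and its second block equation reads `T u = 0`.
-/

open RealInnerProductSpace

section BlockMap

variable {K M₁ M₂ : Type*} [Semiring K] [AddCommMonoid M₁] [Module K M₁]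
  [AddCommMonoid M₂] [Module K M₂]

def blockMap (A : M₁ →ₗ[K] M₁) (B : M₂ →ₗ[K] M₁) (C : M₁ →ₗ[K] M₂) (D : M₂ →ₗ[K] M₂) :
    M₁ × M₂ →ₗ[K] M₁ × M₂ :=
  (A.coprod B).prod (C.coprod D)

@[simp]
theorem blockMap_apply (A : M₁ →ₗ[K] M₁) (B : M₂ →ₗ[K] M₁) (C : M₁ →ₗ[K] M₂)
    (D : M₂ →ₗ[K] M₂) (x : M₁ × M₂) :
    blockMap A B C D x = (A x.1 + B x.2, C x.1 + D x.2) :=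
  rfl

theorem mk_mem_ker_blockMap_iff {A : M₁ →ₗ[K] M₁} {B : M₂ →ₗ[K] M₁} {C : M₁ →ₗ[K] M₂}
    {D : M₂ →ₗ[K] M₂} {v : M₁} {n : M₂} :
    (v, n) ∈ LinearMap.ker (blockMap A B C D) ↔ A v + B n = 0 ∧ C v + D n = 0 := by
  simp

end BlockMap

section InnerProductSpace

variable {V N : Type*} [NormedAddCommGroup V] [InnerProductSpace ℝ V]
  [NormedAddCommGroup N] [InnerProductSpace ℝ N]

theorem LinearMap.IsSymmetric.inner_eq_zero_of_mem_ker {T : N →ₗ[ℝ] N} (hT : T.IsSymmetric)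
    {x u : N} {μ : ℝ} (hμ : μ ≠ 0) (hx : T x = μ • x) (hu : u ∈ LinearMap.ker T) :
    ⟪x, u⟫ = 0 := by
  have h := hT x u
  rw [hx, LinearMap.mem_ker.mp hu, inner_zero_right, real_inner_smul_left] at h
  exact (mul_eq_zero.mp h).resolve_left hμ

theorem eq_inner_smul_of_eq_smul {B v : V} {t : ℝ} (hB : ‖B‖ = 1) (hv : v = t • B) :
    v = ⟪v, B⟫ • B := by
  rw [hv, real_inner_smul_left, real_inner_self_eq_norm_sq, hB, one_pow, mul_one]

variable {R : V →ₗ[ℝ] V} {S : V →ₗ[ℝ] N} {St : N →ₗ[ℝ] V} {T : N →ₗ[ℝ] N} {B : V} {lam : ℝ}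

theorem mk_smul_neg_mem_ker_blockMap (hB : ‖B‖ = 1)
    (hR : ∀ X : V, R X = X - (lam * ⟪X, B⟫) • B) (hS : ∀ X : V, S X = ⟪X, B⟫ • S B)
    (hSt : ∀ n : N, St n = ⟪S B, n⟫ • B) (hSB : ‖S B‖ ^ 2 = lam * (1 - lam))
    (hTSB : T (S B) = lam • S B) :
    (lam • B, -S B) ∈ LinearMap.ker (blockMap R St S T) := by
  have hBB : ⟪B, B⟫ = 1 := by rw [real_inner_self_eq_norm_sq, hB, one_pow]
  rw [mk_mem_ker_blockMap_iff, hR, hSt, hS (lam • B), map_neg, hTSB, inner_neg_right,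
    real_inner_self_eq_norm_sq, hSB, real_inner_smul_left, hBB]
  constructor <;> module

theorem zero_mk_mem_ker_blockMap (hSt : ∀ n : N, St n = ⟪S B, n⟫ • B) (hT : T.IsSymmetric)
    (hlam : lam ≠ 0) (hTSB : T (S B) = lam • S B) {u : N} (hu : u ∈ LinearMap.ker T) :
    ((0 : V), u) ∈ LinearMap.ker (blockMap R St S T) := by
  rw [mk_mem_ker_blockMap_iff, hSt, hT.inner_eq_zero_of_mem_ker hlam hTSB hu,
    LinearMap.mem_ker.mp hu]
  simp

theorem exists_eq_of_mem_ker_blockMap (hB : ‖B‖ = 1) (hlam : lam ≠ 0)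
    (hR : ∀ X : V, R X = X - (lam * ⟪X, B⟫) • B)
    (hSt : ∀ n : N, St n = ⟪S B, n⟫ • B)
    (hw : (lam • B, -S B) ∈ LinearMap.ker (blockMap R St S T))
    {v : V} {n : N} (hvn : (v, n) ∈ LinearMap.ker (blockMap R St S T)) :
    ∃ c : ℝ, ∃ u ∈ LinearMap.ker T, v = c • (lam • B) ∧ n = c • (-(S B)) + u := by
  have hfirst := (mk_mem_ker_blockMap_iff.mp hvn).1
  rw [hR, hSt] at hfirst
  have hv : v = ⟪v, B⟫ • B :=
    eq_inner_smul_of_eq_smul hB (t := lam * ⟪v, B⟫ - ⟪S B, n⟫) (by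
      rw [sub_smul]; linear_combination (norm := module) hfirst)
  set c := ⟪v, B⟫ / lam
  have hvc : v = c • (lam • B) := by
    rw [smul_smul, div_mul_cancel₀ _ hlam]; exact hv
  have hu : ((0 : V), n - c • (-(S B))) ∈ LinearMap.ker (blockMap R St S T) := by
    convert sub_mem hvn (Submodule.smul_mem _ c hw) using 1
    rw [Prod.smul_mk, Prod.mk_sub_mk, ← hvc, sub_self]
  refine ⟨c, n - c • (-(S B)), ?_, hvc, by abel⟩
  simpa using (mk_mem_ker_blockMap_iff.mp hu).2

end InnerProductSpace

theorem kernel_of_projection_rank_one_general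
    {V N : Type*} [NormedAddCommGroup V] [InnerProductSpace ℝ V] [FiniteDimensional ℝ V]
    [NormedAddCommGroup N] [InnerProductSpace ℝ N] [FiniteDimensional ℝ N]
    (R : V →ₗ[ℝ] V) (S : V →ₗ[ℝ] N) (St : N →ₗ[ℝ] V) (T : N →ₗ[ℝ] N)
    (B : V) (lam : ℝ)
    (hB : ‖B‖ = 1) (hlam0 : 0 < lam)
    (hR : ∀ X : V, R X = X - (lam * ⟪X, B⟫) • B)
    (hS : ∀ X : V, S X = ⟪X, B⟫ • S B)
    (hSt : ∀ n : N, St n = ⟪S B, n⟫ • B)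
    (hSB : ‖S B‖ ^ 2 = lam * (1 - lam))
    (hTSB : T (S B) = lam • S B)
    (hT : LinearMap.adjoint T = T) :
    ∀ (v : V) (n : N), (R v + St n = 0 ∧ S v + T n = 0) ↔
      ∃ c : ℝ, ∃ u ∈ LinearMap.ker T,
        v = c • (lam • B) ∧ n = c • (-(S B)) + u := by
  have hsymm : T.IsSymmetric :=
    (T.isSymmetric_iff_isSelfAdjoint).mpr (LinearMap.isSelfAdjoint_iff'.mpr hT)
  have hw := mk_smul_neg_mem_ker_blockMap hB hR hS hSt hSB hTSB
  intro v n
  rw [← mk_mem_ker_blockMap_iff]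
  refine ⟨exists_eq_of_mem_ker_blockMap hB hlam0.ne' hR hSt hw, ?_⟩
  rintro ⟨c, u, hu, rfl, rfl⟩
  have hsplit : (c • (lam • B), c • (-(S B)) + u) = c • (lam • B, -S B) + ((0 : V), u) := by
    simp
  rw [hsplit]
  exact add_mem (Submodule.smul_mem _ c hw)
    (zero_mk_mem_ker_blockMap hSt hsymm hlam0.ne' hTSB hu)

/-- Kernel of the projection `π₂` on `V ⊕ N` in the rank-one situation:
with `(Id-R)X = λ⟨X,B⟩B`, `SX = ⟨X,B⟩SB`, `Sᵗn = ⟨SB,n⟩B`, `|SB|² = λ(1-λ)`,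
`T(SB) = λ·SB`, `λ ∈ (0,1)`, the kernel of `P(v,n) = (Rv + Sᵗn, Sv + Tn)` is
spanned by `(λB, -SB)` together with `{0} × ker T`. -/
theorem kernel_of_projection_rank_one
    {V N : Type*} [NormedAddCommGroup V] [InnerProductSpace ℝ V] [FiniteDimensional ℝ V]
    [NormedAddCommGroup N] [InnerProductSpace ℝ N] [FiniteDimensional ℝ N]
    (R : V →ₗ[ℝ] V) (S : V →ₗ[ℝ] N) (St : N →ₗ[ℝ] V) (T : N →ₗ[ℝ] N)
    (B : V) (lam : ℝ)
    (hB : ‖B‖ = 1) (hlam0 : 0 < lam) (hlam1 : lam < 1)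
    (hR : ∀ X : V, R X = X - (lam * ⟪X, B⟫) • B)
    (hS : ∀ X : V, S X = ⟪X, B⟫ • S B)
    (hSt : ∀ n : N, St n = ⟪S B, n⟫ • B)
    (hSB : ‖S B‖ ^ 2 = lam * (1 - lam))
    (hTSB : T (S B) = lam • S B)
    (hT : LinearMap.adjoint T = T) :
    ∀ (v : V) (n : N), (R v + St n = 0 ∧ S v + T n = 0) ↔
      ∃ c : ℝ, ∃ u ∈ LinearMap.ker T,
        v = c • (lam • B) ∧ n = c • (-(S B)) + u :=
  kernel_of_projection_rank_one_general R S St T B lam hB hlam0 hR hS hSt hSB hTSB hT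
end

section
/- Let V, N be finite-dimensional real inner product spaces, S : V → N linear, Φ : V → V self-adjoint. Suppose that for all X, Y, Z ∈ V: ⟨Φ X, Z⟩ S Y = ⟨Φ Y, Z⟩ S X. If Φ ≠ 0 and S ≠ 0, then there is a unit vector B ∈ V and nonzero μ ∈ ℝ such that S X = ⟨X,B⟩ S B and Φ X = μ⟨X,B⟩ B for all X ∈ V. -/
/-!
Fix `X₀` with `Φ X₀ ≠ 0`. Taking `Z = Φ X₀` in the identity shows that `S` factors through the
single linear form `Y ↦ ⟪Φ Y, Φ X₀⟫`, so `S X = ⟪X, B⟫ • S B` for a unit vector `B`. Feeding this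
back into the identity and cancelling `S B ≠ 0` gives `Φ X = ⟪X, B⟫ • Φ B`, and self-adjointness
of `Φ` forces `Φ B = μ • B` with `μ = ⟪Φ B, B⟫`, which is nonzero because `Φ ≠ 0`.
-/

open RealInnerProductSpace

theorem eq_div_smul_of_forall_smul_eq_smul {K ι M : Type*} [Field K] [AddCommGroup M]
    [Module K M] {f : ι → K} {g : ι → M} (h : ∀ x y, f x • g y = f y • g x) {x₀ : ι}
    (hx₀ : f x₀ ≠ 0) (y : ι) : g y = (f y / f x₀) • g x₀ := by
  rw [div_eq_inv_mul, mul_smul, ← h x₀ y, inv_smul_smul₀ hx₀]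

section

variable {V N : Type*} [NormedAddCommGroup V] [InnerProductSpace ℝ V]
  [AddCommGroup N] [Module ℝ N]

theorem exists_unit_eq_inner_smul_self {S : V →ₗ[ℝ] N} {A : V} {n : N}
    (hS : S ≠ 0) (hSA : ∀ Y, S Y = ⟪Y, A⟫ • n) :
    ∃ B : V, ‖B‖ = 1 ∧ ∀ Y, S Y = ⟪Y, B⟫ • S B := by
  have hA : A ≠ 0 := by
    rintro rfl
    exact hS (LinearMap.ext fun Y => by simp [hSA Y])
  have hA' : ‖A‖ ≠ 0 := norm_ne_zero_iff.mpr hA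
  refine ⟨‖A‖⁻¹ • A, by simp [norm_smul, hA'], fun Y => ?_⟩
  rw [hSA, hSA, real_inner_smul_right, real_inner_smul_left, real_inner_self_eq_norm_sq,
    smul_smul]
  congr 1
  field_simp

theorem exists_eq_inner_smul_of_codazzi [FiniteDimensional ℝ V] {S : V →ₗ[ℝ] N}
    {Φ : V →ₗ[ℝ] V} (h : ∀ X Y Z : V, ⟪Φ X, Z⟫ • S Y = ⟪Φ Y, Z⟫ • S X) (hΦ : Φ ≠ 0) :
    ∃ (A : V) (n : N), ∀ Y, S Y = ⟪Y, A⟫ • n := by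
  obtain ⟨X₀, hX₀⟩ := DFunLike.ne_iff.mp hΦ
  have hX₀' : ⟪Φ X₀, Φ X₀⟫ ≠ 0 := inner_self_ne_zero.mpr hX₀
  refine ⟨LinearMap.adjoint Φ (Φ X₀), ⟪Φ X₀, Φ X₀⟫⁻¹ • S X₀, fun Y => ?_⟩
  rw [eq_div_smul_of_forall_smul_eq_smul (fun X Y => h X Y (Φ X₀)) hX₀' Y,
    LinearMap.adjoint_inner_right, div_eq_mul_inv, mul_smul]

theorem eq_inner_smul_apply_of_codazzi {S : V →ₗ[ℝ] N} {Φ : V →ₗ[ℝ] V} {B : V}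
    (h : ∀ X Y Z : V, ⟪Φ X, Z⟫ • S Y = ⟪Φ Y, Z⟫ • S X) (hS : S ≠ 0) (hB : ‖B‖ = 1)
    (hSB : ∀ Y, S Y = ⟪Y, B⟫ • S B) (X : V) : Φ X = ⟪X, B⟫ • Φ B := by
  have hSB₀ : S B ≠ 0 := by
    intro h0
    exact hS (LinearMap.ext fun Y => by simp [hSB Y, h0])
  have hΦ : ∀ X Y, ⟪X, B⟫ • Φ Y = ⟪Y, B⟫ • Φ X := by
    intro X Y
    refine ext_inner_right ℝ fun Z => ?_
    have hXYZ := h X Y Z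
    rw [hSB X, hSB Y, smul_smul, smul_smul] at hXYZ
    simp only [real_inner_smul_left]
    linarith [smul_left_injective ℝ hSB₀ hXYZ]
  have hBB : ⟪B, B⟫ = 1 := by rw [real_inner_self_eq_norm_sq, hB, one_pow]
  have hΦX := eq_div_smul_of_forall_smul_eq_smul hΦ (x₀ := B) (by rw [hBB]; exact one_ne_zero) X
  rwa [hBB, div_one] at hΦX

end

theorem LinearMap.IsSymmetric.eq_inner_mul_inner_smul {V : Type*} [NormedAddCommGroup V]
    [InnerProductSpace ℝ V] {Φ : V →ₗ[ℝ] V} (hΦ : Φ.IsSymmetric) {B : V} (hB : ‖B‖ = 1)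
    (hΦB : ∀ X, Φ X = ⟪X, B⟫ • Φ B) (X : V) : Φ X = (⟪Φ B, B⟫ * ⟪X, B⟫) • B := by
  have hBB : ⟪B, B⟫ = 1 := by rw [real_inner_self_eq_norm_sq, hB, one_pow]
  have hΦB' : Φ B = ⟪Φ B, B⟫ • B := by
    refine ext_inner_right ℝ fun Y => ?_
    rw [hΦ, hΦB Y, real_inner_smul_right, real_inner_smul_left, real_inner_comm B Y,
      real_inner_comm B (Φ B), mul_comm]
  rw [hΦB X]
  nth_rw 1 [hΦB']
  rw [smul_smul, mul_comm]

theorem rank_one_structure_of_codazzi_identity_general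
    {V N : Type*} [NormedAddCommGroup V] [InnerProductSpace ℝ V] [FiniteDimensional ℝ V]
    [NormedAddCommGroup N] [InnerProductSpace ℝ N]
    (S : V →ₗ[ℝ] N) (Φ : V →ₗ[ℝ] V)
    (hΦadj : LinearMap.adjoint Φ = Φ)
    (h : ∀ X Y Z : V, ⟪Φ X, Z⟫ • S Y = ⟪Φ Y, Z⟫ • S X)
    (hΦ : Φ ≠ 0) (hS : S ≠ 0) :
    ∃ B : V, ‖B‖ = 1 ∧ ∃ μ : ℝ, μ ≠ 0 ∧
      (∀ X : V, S X = ⟪X, B⟫ • S B) ∧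
      (∀ X : V, Φ X = (μ * ⟪X, B⟫) • B) := by
  obtain ⟨A, n, hSA⟩ := exists_eq_inner_smul_of_codazzi h hΦ
  obtain ⟨B, hB, hSB⟩ := exists_unit_eq_inner_smul_self hS hSA
  have hΦsymm : Φ.IsSymmetric := (Φ.isSymmetric_iff_isSelfAdjoint).mpr hΦadj
  have hΦB := hΦsymm.eq_inner_mul_inner_smul hB (eq_inner_smul_apply_of_codazzi h hS hB hSB)
  refine ⟨B, hB, ⟪Φ B, B⟫, fun hμ => hΦ ?_, hSB, hΦB⟩
  exact LinearMap.ext fun X => by simp [hΦB X, hμ]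

/-- If `⟨ΦX, Z⟩·SY = ⟨ΦY, Z⟩·SX` for all `X, Y, Z` with `Φ` self-adjoint, and
both `Φ ≠ 0` and `S ≠ 0`, then there are a unit vector `B` and `μ ≠ 0` with
`SX = ⟨X,B⟩SB` and `ΦX = μ⟨X,B⟩B`. -/
theorem rank_one_structure_of_codazzi_identity
    {V N : Type*} [NormedAddCommGroup V] [InnerProductSpace ℝ V] [FiniteDimensional ℝ V]
    [NormedAddCommGroup N] [InnerProductSpace ℝ N] [FiniteDimensional ℝ N]
    (S : V →ₗ[ℝ] N) (Φ : V →ₗ[ℝ] V)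
    (hΦadj : LinearMap.adjoint Φ = Φ)
    (h : ∀ X Y Z : V, ⟪Φ X, Z⟫ • S Y = ⟪Φ Y, Z⟫ • S X)
    (hΦ : Φ ≠ 0) (hS : S ≠ 0) :
    ∃ B : V, ‖B‖ = 1 ∧ ∃ μ : ℝ, μ ≠ 0 ∧
      (∀ X : V, S X = ⟪X, B⟫ • S B) ∧
      (∀ X : V, Φ X = (μ * ⟪X, B⟫) • B) :=
  rank_one_structure_of_codazzi_identity_general S Φ hΦadj h hΦ hS
end
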